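/- arXiv:1910.03199 — 3 statements merged into one kernel-verified Lean document; each statement's English description precedes it below -/
import Mathlib

section
/- Let γ ∈ (1,2) and ⟨m,n⟩_γ = m₁n₁ + γ·m₂n₂. Fix μ, dyadic N₁, N₂, N₃ with max = N¹ and fix n₁ ∈ ℤ². Then for every ε > 0, the number of pairs (n₂, n₃) ∈ ℤ² × ℤ² with |n₂| ∼ N₂, |n₃| ∼ N₃, n₂ ≠ n₁, n₂ ≠ n₃, and ⟨n₂−n₁, n₂−n₃⟩_γ = μ + O(1) is at most C_ε·(N¹)^ε·N₂·N₃. -/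
/-!
Write `u = n₂ - n₁` and `v = n₂ - n₃`, so that the constraint reads `u₁v₁ + γ u₂v₂ = μ + O(1)`.
Once the second coordinates `n₂.2`, `n₃.2` are fixed (`O(N₂N₃)` choices), `u₁v₁` is one of at most
three integers of size `O((N¹)²)`, and by the divisor bound each of them has `O_ε((N¹)^ε)`
factorizations `(u₁, v₁)`, which determine `n₂.1` and `n₃.1`. The degenerate cases are easier: if
`u₁v₁ = 0 ≠ u₂` then `n₂.1 ∈ {n₁.1, n₃.1}` and `v₂` lies within `1/(γ|u₂|) ≤ 1` of `μ/(γu₂)`;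
if `u₁v₁ = 0 = u₂` then `n₂ ≠ n₁` forces `n₂ = (n₃.1, n₁.2)`.
-/

open Real

/-- The `γ`-bilinear form `⟨m,n⟩_γ = m₁ n₁ + γ m₂ n₂` on `ℤ²`. -/
noncomputable def gammaInner (γ : ℝ) (m n : ℤ × ℤ) : ℝ :=
  (m.1 : ℝ) * (n.1 : ℝ) + γ * (m.2 : ℝ) * (n.2 : ℝ)

/-- Dyadic localization `|n| ∼ N`. -/
noncomputable def dyadic (N : ℝ) (n : ℤ × ℤ) : Prop :=
  N ≤ Real.sqrt ((n.1 : ℝ) ^ 2 + (n.2 : ℝ) ^ 2) ∧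
    Real.sqrt ((n.1 : ℝ) ^ 2 + (n.2 : ℝ) ^ 2) ≤ 2 * N

open Finset

theorem succ_le_mul_two_pow_rpow {ε : ℝ} (hε : 0 < ε) (k : ℕ) :
    (k + 1 : ℝ) ≤ (1 + (ε * log 2)⁻¹) * ((2 : ℝ) ^ k) ^ ε := by
  set a := ε * log 2
  have ha : 0 < a := mul_pos hε (log_pos one_lt_two)
  have hexp : 1 + k * a ≤ ((2 : ℝ) ^ k) ^ ε := by
    rw [← rpow_natCast, ← rpow_mul zero_le_two, rpow_def_of_pos two_pos]
    linarith [add_one_le_exp (log 2 * (k * ε))]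
  have hexpand : (1 + a⁻¹) * (1 + k * a) = k + 1 + (k * a + a⁻¹) := by field_simp; ring
  calc (k + 1 : ℝ) ≤ (1 + a⁻¹) * (1 + k * a) := by
          rw [hexpand]; linarith [inv_pos.2 ha, mul_nonneg (Nat.cast_nonneg k) ha.le]
    _ ≤ (1 + a⁻¹) * ((2 : ℝ) ^ k) ^ ε := by gcongr

theorem succ_le_pow_rpow_of_two_rpow_le {ε x : ℝ} (hε : 0 < ε) (hx : 2 ^ ε⁻¹ ≤ x) (k : ℕ) :
    (k + 1 : ℝ) ≤ (x ^ k) ^ ε :=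
  calc (k + 1 : ℝ) ≤ 2 ^ k := by exact_mod_cast Nat.lt_two_pow_self
    _ = (((2 : ℝ) ^ ε⁻¹) ^ k) ^ ε := by
      rw [← rpow_natCast, ← rpow_natCast, ← rpow_mul zero_le_two, ← rpow_mul (by positivity),
        mul_comm, ← mul_assoc, mul_inv_cancel₀ hε.ne', one_mul]
    _ ≤ (x ^ k) ^ ε := by gcongr

theorem Nat.exists_card_divisors_le_rpow {ε : ℝ} (hε : 0 < ε) :
    ∃ C : ℝ, 0 < C ∧ ∀ n : ℕ, n ≠ 0 → (#n.divisors : ℝ) ≤ C * n ^ ε := by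
  set P := ⌈(2 : ℝ) ^ ε⁻¹⌉₊
  set M := 1 + (ε * Real.log 2)⁻¹
  have hM : 1 ≤ M :=
    le_add_of_nonneg_right (inv_nonneg.2 (mul_pos hε (Real.log_pos one_lt_two)).le)
  refine ⟨M ^ P, by positivity, fun n hn => ?_⟩
  -- only the primes below `2 ^ (1/ε)` can have `k + 1 > (p ^ k) ^ ε`
  have hlocal : ∀ p ∈ n.primeFactors, (n.factorization p + 1 : ℝ) ≤
      (if p < P then M else 1) * ((p : ℝ) ^ n.factorization p) ^ ε := by
    intro p hp
    have hp2 : (2 : ℝ) ≤ p := by exact_mod_cast (prime_of_mem_primeFactors hp).two_le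
    split_ifs with hpP
    · exact (succ_le_mul_two_pow_rpow hε _).trans (by gcongr)
    · rw [one_mul]
      exact succ_le_pow_rpow_of_two_rpow_le hε
        ((Nat.le_ceil _).trans (by exact_mod_cast not_lt.1 hpP)) _
  have hsmall : ∏ p ∈ n.primeFactors, (if p < P then M else 1) ≤ M ^ P := by
    rw [prod_ite, prod_const, prod_const_one, mul_one]
    refine pow_le_pow_right₀ hM ((card_le_card fun p hp => ?_).trans (card_range P).le)
    exact mem_range.2 (mem_filter.1 hp).2
  have hprod : ∏ p ∈ n.primeFactors, ((p : ℝ) ^ n.factorization p) ^ ε = (n : ℝ) ^ ε := by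
    rw [finsetProd_rpow _ _ fun _ _ => by positivity]
    congr 1
    exact_mod_cast (prod_primeFactors_pow_factorization hn).symm
  calc (#n.divisors : ℝ) = ∏ p ∈ n.primeFactors, (n.factorization p + 1 : ℝ) := by
        rw [Nat.card_divisors hn]; push_cast; rfl
    _ ≤ ∏ p ∈ n.primeFactors, (if p < P then M else 1) * ((p : ℝ) ^ n.factorization p) ^ ε :=
        prod_le_prod (fun _ _ => by positivity) hlocal
    _ ≤ M ^ P * n ^ ε := by rw [prod_mul_distrib, hprod]; gcongr

theorem card_divisors_le_rpow_of_le_sq {C ε x : ℝ} (hε : 0 ≤ ε) (hx : 0 ≤ x)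
    (hdiv : ∀ n : ℕ, n ≠ 0 → (#n.divisors : ℝ) ≤ C * n ^ (ε / 2)) {m : ℕ} (hm : m ≠ 0)
    (hmx : (m : ℝ) ≤ x ^ 2) : (#m.divisors : ℝ) ≤ C * x ^ ε := by
  have hC : 0 ≤ C := zero_le_one.trans (by simpa using hdiv 1 one_ne_zero)
  calc (#m.divisors : ℝ) ≤ C * m ^ (ε / 2) := hdiv m hm
    _ ≤ C * (x ^ 2) ^ (ε / 2) := by gcongr
    _ = C * x ^ ε := by
      rw [← rpow_natCast, ← rpow_mul hx, Nat.cast_ofNat, mul_div_cancel₀ _ two_ne_zero]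

theorem Int.card_divisorsAntidiag (z : ℤ) : #z.divisorsAntidiag = 2 * #z.natAbs.divisors := by
  have hdiv : #z.divisors = 2 * #z.natAbs.divisors := by
    rw [Int.divisors, card_disjUnion, card_map, card_map, two_mul]
  rw [← hdiv, ← Int.image_fst_divisorsAntidiag, card_image_of_injOn]
  rintro ⟨a, b⟩ hab ⟨c, d⟩ hcd (rfl : a = c)
  rw [mem_coe, Int.mem_divisorsAntidiag] at hab hcd
  have ha : a ≠ 0 := left_ne_zero_of_mul (hab.1 ▸ hab.2)
  exact congrArg _ (mul_left_cancel₀ ha (hab.1.trans hcd.1.symm))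

noncomputable def intIcc (a b : ℝ) : Finset ℤ := Icc ⌈a⌉ ⌊b⌋

theorem mem_intIcc {a b : ℝ} {x : ℤ} : x ∈ intIcc a b ↔ a ≤ x ∧ (x : ℝ) ≤ b := by
  rw [intIcc, mem_Icc, Int.ceil_le, Int.le_floor]

theorem card_intIcc_le {a b : ℝ} (hab : a ≤ b) : (#(intIcc a b) : ℝ) ≤ b - a + 1 := by
  have hlo : ⌈a⌉ ≤ ⌊b⌋ + 1 := (Int.ceil_mono hab).trans (Int.ceil_le_floor_add_one b)
  have hcard : (#(intIcc a b) : ℤ) = ⌊b⌋ + 1 - ⌈a⌉ := by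
    rw [intIcc, Int.card_Icc, Int.toNat_of_nonneg (by omega)]
  have hcard' : (#(intIcc a b) : ℝ) = ⌊b⌋ + 1 - ⌈a⌉ := by exact_mod_cast hcard
  linarith [Int.floor_le b, Int.le_ceil a]

theorem mem_intIcc_of_abs_sub_le_one {c : ℝ} {m : ℤ} (h : |(m : ℝ) - c| ≤ 1) :
    m ∈ intIcc (c - 1) (c + 1) := by
  rw [mem_intIcc]
  constructor <;> linarith [abs_sub_le_iff.1 h]

theorem abs_sub_div_le_one {a x y : ℝ} (ha : 1 ≤ |a|) (h : |a * x - y| ≤ 1) :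
    |x - y / a| ≤ 1 := by
  have ha₀ : a ≠ 0 := abs_pos.1 (zero_lt_one.trans_le ha)
  rw [show x - y / a = (a * x - y) / a by field_simp, abs_div, div_le_one (by positivity)]
  exact h.trans ha

-- `Int.divisorsAntidiag 0 = ∅`, so only the factorizations with `a * b ≠ 0` are listed.
noncomputable def nearFactorizations (c : ℝ) : Finset (ℤ × ℤ) :=
  (intIcc (c - 1) (c + 1)).biUnion Int.divisorsAntidiag

theorem mem_nearFactorizations {c : ℝ} {a b : ℤ} (hab : a * b ≠ 0)
    (h : |((a * b : ℤ) : ℝ) - c| ≤ 1) : (a, b) ∈ nearFactorizations c :=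
  mem_biUnion.2 ⟨a * b, mem_intIcc_of_abs_sub_le_one h, Int.mem_divisorsAntidiag.2 ⟨rfl, hab⟩⟩

theorem card_nearFactorizations_le {c D : ℝ}
    (hD : ∀ m : ℕ, m ≠ 0 → (m : ℝ) ≤ |c| + 1 → (#m.divisors : ℝ) ≤ D) :
    (#(nearFactorizations c) : ℝ) ≤ 6 * D := by
  have hD₀ : 0 ≤ D := zero_le_one.trans (by simpa using hD 1 one_ne_zero (by simp))
  have hfiber : ∀ G ∈ intIcc (c - 1) (c + 1), (#G.divisorsAntidiag : ℝ) ≤ 2 * D := by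
    intro G hG
    rcases eq_or_ne G 0 with rfl | hG₀
    · simp [hD₀]
    rw [Int.card_divisorsAntidiag]
    push_cast
    refine mul_le_mul_of_nonneg_left (hD _ (Int.natAbs_ne_zero.2 hG₀) ?_) zero_le_two
    rw [mem_intIcc] at hG
    rw [Nat.cast_natAbs, Int.cast_abs, abs_le]
    constructor <;> linarith [neg_abs_le c, le_abs_self c]
  calc (#(nearFactorizations c) : ℝ)
      ≤ ∑ G ∈ intIcc (c - 1) (c + 1), (#G.divisorsAntidiag : ℝ) := by
        exact_mod_cast card_biUnion_le
    _ ≤ ∑ _G ∈ intIcc (c - 1) (c + 1), 2 * D := sum_le_sum hfiber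
    _ ≤ 3 * (2 * D) := by
        rw [sum_const, nsmul_eq_mul]
        gcongr
        linarith [card_intIcc_le (by linarith : c - 1 ≤ c + 1)]
    _ = 6 * D := by ring

theorem Set.ncard_le_mul_card_of_injOn {α β ι : Type*} {s : Set α} {T : Finset β}
    {F : β → Finset ι} {K : ℝ} (g : α → β) (h : α → ι) (hg : ∀ x ∈ s, g x ∈ T)
    (hh : ∀ x ∈ s, h x ∈ F (g x)) (hF : ∀ t ∈ T, (#(F t) : ℝ) ≤ K)
    (hinj : InjOn (fun x => (g x, h x)) s) : (s.ncard : ℝ) ≤ K * #T := by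
  have hcard : s.ncard ≤ #(T.sigma F) := by
    rw [← Set.ncard_coe_finset]
    refine Set.ncard_le_ncard_of_injOn (fun x => (⟨g x, h x⟩ : Σ _ : β, ι))
      (fun x hx => mem_sigma.2 ⟨hg x hx, hh x hx⟩) (fun x hx y hy hxy => hinj hx hy ?_)
      (finite_toSet _)
    obtain ⟨hg, hh⟩ := Sigma.mk.inj_iff.1 hxy
    exact Prod.ext hg (eq_of_heq hh)
  calc (s.ncard : ℝ) ≤ #(T.sigma F) := by exact_mod_cast hcard
    _ = ∑ t ∈ T, (#(F t) : ℝ) := by rw [card_sigma]; push_cast; rfl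
    _ ≤ ∑ _t ∈ T, K := sum_le_sum hF
    _ = K * #T := by rw [sum_const, nsmul_eq_mul, mul_comm]

theorem gammaInner_sub_sub (γ : ℝ) (n₁ n₂ n₃ : ℤ × ℤ) :
    gammaInner γ (n₂ - n₁) (n₂ - n₃) = (((n₂.1 - n₁.1) * (n₂.1 - n₃.1) : ℤ) : ℝ) +
      γ * ((n₂.2 - n₁.2 : ℤ) : ℝ) * ((n₂.2 - n₃.2 : ℤ) : ℝ) := by
  simp only [gammaInner, Prod.fst_sub, Prod.snd_sub]
  push_cast
  ring

def nearPairs (γ μ : ℝ) (n₁ : ℤ × ℤ) (I₂ I₃ : Finset ℤ) : Set ((ℤ × ℤ) × (ℤ × ℤ)) :=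
  {p | p.1 ∈ I₂ ×ˢ I₂ ∧ p.2 ∈ I₃ ×ˢ I₃ ∧ p.1 ≠ n₁ ∧
    |gammaInner γ (p.1 - n₁) (p.1 - p.2) - μ| ≤ 1}

section nearPairs

variable {γ μ : ℝ} {n₁ : ℤ × ℤ} {I₂ I₃ : Finset ℤ}

theorem mem_nearPairs {p : (ℤ × ℤ) × (ℤ × ℤ)} : p ∈ nearPairs γ μ n₁ I₂ I₃ ↔
    p.1 ∈ I₂ ×ˢ I₂ ∧ p.2 ∈ I₃ ×ˢ I₃ ∧ p.1 ≠ n₁ ∧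
      |gammaInner γ (p.1 - n₁) (p.1 - p.2) - μ| ≤ 1 :=
  Iff.rfl

theorem finite_nearPairs : (nearPairs γ μ n₁ I₂ I₃).Finite :=
  ((I₂ ×ˢ I₂) ×ˢ (I₃ ×ˢ I₃)).finite_toSet.subset fun _ hp => mem_product.2 ⟨hp.1, hp.2.1⟩

theorem ncard_nearPairs_mul_ne_zero_le {D : ℝ} (hD : ∀ t ∈ I₂ ×ˢ I₃, ∀ m : ℕ, m ≠ 0 →
      (m : ℝ) ≤ |μ - γ * ((t.1 - n₁.2 : ℤ) : ℝ) * ((t.1 - t.2 : ℤ) : ℝ)| + 1 →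
      (#m.divisors : ℝ) ≤ D) :
    ({p ∈ nearPairs γ μ n₁ I₂ I₃ | (p.1.1 - n₁.1) * (p.1.1 - p.2.1) ≠ 0}.ncard : ℝ) ≤
      6 * D * (#I₂ * #I₃) := by
  refine (Set.ncard_le_mul_card_of_injOn (T := I₂ ×ˢ I₃)
    (F := fun t => nearFactorizations (μ - γ * ((t.1 - n₁.2 : ℤ) : ℝ) * ((t.1 - t.2 : ℤ) : ℝ)))
    (fun p : (ℤ × ℤ) × (ℤ × ℤ) => (p.1.2, p.2.2)) (fun p => (p.1.1 - n₁.1, p.1.1 - p.2.1)) ?_ ?_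
    (fun t ht => card_nearFactorizations_le (hD t ht)) ?_).trans_eq
    (by rw [card_product, Nat.cast_mul])
  · rintro p ⟨⟨hp₂, hp₃, -, -⟩, -⟩
    exact mem_product.2 ⟨(mem_product.1 hp₂).2, (mem_product.1 hp₃).2⟩
  · rintro p ⟨⟨-, -, -, hp⟩, hne⟩
    refine mem_nearFactorizations hne ?_
    rw [gammaInner_sub_sub] at hp
    convert hp using 2
    ring
  · rintro ⟨⟨a, b⟩, c, d⟩ - ⟨⟨a', b'⟩, c', d'⟩ - h
    simp only [Prod.mk.injEq] at h ⊢
    omega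

theorem ncard_nearPairs_mul_eq_zero_of_ne_le (hγ : 1 ≤ γ) :
    ({p ∈ nearPairs γ μ n₁ I₂ I₃ | (p.1.1 - n₁.1) * (p.1.1 - p.2.1) = 0 ∧ p.1.2 ≠ n₁.2}.ncard
      : ℝ) ≤ 6 * (#I₂ * #I₃) := by
  refine (Set.ncard_le_mul_card_of_injOn (T := I₂ ×ˢ I₃) (K := 6)
    (F := fun t => {n₁.1, t.2} ×ˢ
      intIcc (μ / (γ * ((t.1 - n₁.2 : ℤ) : ℝ)) - 1) (μ / (γ * ((t.1 - n₁.2 : ℤ) : ℝ)) + 1))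
    (fun p : (ℤ × ℤ) × (ℤ × ℤ) => (p.1.2, p.2.1)) (fun p => (p.1.1, p.1.2 - p.2.2))
    ?_ ?_ ?_ ?_).trans_eq
    (by rw [card_product, Nat.cast_mul])
  · rintro p ⟨⟨hp₂, hp₃, -, -⟩, -⟩
    exact mem_product.2 ⟨(mem_product.1 hp₂).2, (mem_product.1 hp₃).1⟩
  · rintro p ⟨⟨-, -, -, hp⟩, hu₁v₁, hu₂⟩
    rw [gammaInner_sub_sub, hu₁v₁, Int.cast_zero, zero_add] at hp
    refine mem_product.2 ⟨?_, mem_intIcc_of_abs_sub_le_one (abs_sub_div_le_one ?_ hp)⟩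
    · rcases mul_eq_zero.1 hu₁v₁ with h | h <;> simp [sub_eq_zero.1 h]
    · have : (1 : ℝ) ≤ |((p.1.2 - n₁.2 : ℤ) : ℝ)| := by
        exact_mod_cast Int.one_le_abs (sub_ne_zero.2 hu₂)
      rw [abs_mul, abs_of_pos (zero_lt_one.trans_le hγ)]
      exact one_le_mul_of_one_le_of_one_le hγ this
  · intro t _
    rw [card_product, Nat.cast_mul]
    have h₁ : (#({n₁.1, t.2} : Finset ℤ) : ℝ) ≤ 2 := by exact_mod_cast card_le_two
    have h₂ := card_intIcc_le (by linarith :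
      μ / (γ * ((t.1 - n₁.2 : ℤ) : ℝ)) - 1 ≤ μ / (γ * ((t.1 - n₁.2 : ℤ) : ℝ)) + 1)
    nlinarith
  · rintro ⟨⟨a, b⟩, c, d⟩ - ⟨⟨a', b'⟩, c', d'⟩ - h
    simp only [Prod.mk.injEq] at h ⊢
    omega

theorem ncard_nearPairs_mul_eq_zero_of_eq_le :
    ({p ∈ nearPairs γ μ n₁ I₂ I₃ | (p.1.1 - n₁.1) * (p.1.1 - p.2.1) = 0 ∧ p.1.2 = n₁.2}.ncard
      : ℝ) ≤ #I₂ * #I₃ := by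
  have hcoord : ∀ p ∈ {p ∈ nearPairs γ μ n₁ I₂ I₃ |
      (p.1.1 - n₁.1) * (p.1.1 - p.2.1) = 0 ∧ p.1.2 = n₁.2}, p.2.1 = p.1.1 ∧ p.1.2 = n₁.2 := by
    rintro p ⟨⟨-, -, hne, -⟩, hu₁v₁, hu₂⟩
    have hu₁ : p.1.1 - n₁.1 ≠ 0 := fun h => hne (Prod.ext (by omega) hu₂)
    exact ⟨(sub_eq_zero.1 ((mul_eq_zero.1 hu₁v₁).resolve_left hu₁)).symm, hu₂⟩
  rw [← Nat.cast_mul, ← card_product, Nat.cast_le, ← Set.ncard_coe_finset]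
  refine Set.ncard_le_ncard_of_injOn (fun p => (p.1.1, p.2.2)) ?_ ?_ (finite_toSet _)
  · rintro p ⟨⟨hp₂, hp₃, -, -⟩, -⟩
    exact mem_product.2 ⟨(mem_product.1 hp₂).1, (mem_product.1 hp₃).2⟩
  · rintro ⟨⟨a, b⟩, c, d⟩ hp ⟨⟨a', b'⟩, c', d'⟩ hq h
    have hp' := hcoord _ hp
    have hq' := hcoord _ hq
    simp only [Prod.mk.injEq] at h hp' hq' ⊢
    omega

theorem ncard_nearPairs_le {D : ℝ} (hγ : 1 ≤ γ) (hD : ∀ t ∈ I₂ ×ˢ I₃, ∀ m : ℕ, m ≠ 0 →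
      (m : ℝ) ≤ |μ - γ * ((t.1 - n₁.2 : ℤ) : ℝ) * ((t.1 - t.2 : ℤ) : ℝ)| + 1 →
      (#m.divisors : ℝ) ≤ D) :
    ((nearPairs γ μ n₁ I₂ I₃).ncard : ℝ) ≤ (6 * D + 7) * (#I₂ * #I₃) := by
  set s := nearPairs γ μ n₁ I₂ I₃
  set A := {p ∈ s | (p.1.1 - n₁.1) * (p.1.1 - p.2.1) ≠ 0}
  set B := {p ∈ s | (p.1.1 - n₁.1) * (p.1.1 - p.2.1) = 0 ∧ p.1.2 ≠ n₁.2}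
  set C := {p ∈ s | (p.1.1 - n₁.1) * (p.1.1 - p.2.1) = 0 ∧ p.1.2 = n₁.2}
  have hsplit : s = A ∪ B ∪ C := by
    ext p
    simp only [A, B, C, Set.mem_union, Set.mem_sep_iff]
    tauto
  have hA : (A.ncard : ℝ) ≤ 6 * D * (#I₂ * #I₃) := ncard_nearPairs_mul_ne_zero_le hD
  have hB : (B.ncard : ℝ) ≤ 6 * (#I₂ * #I₃) := ncard_nearPairs_mul_eq_zero_of_ne_le hγ
  have hC : (C.ncard : ℝ) ≤ #I₂ * #I₃ := ncard_nearPairs_mul_eq_zero_of_eq_le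
  have hunion : (A ∪ B ∪ C).ncard ≤ A.ncard + B.ncard + C.ncard :=
    (Set.ncard_union_le _ _).trans (add_le_add (Set.ncard_union_le _ _) le_rfl)
  rw [hsplit]
  calc ((A ∪ B ∪ C).ncard : ℝ) ≤ A.ncard + B.ncard + C.ncard := by exact_mod_cast hunion
    _ ≤ (6 * D + 7) * (#I₂ * #I₃) := by linarith

end nearPairs

theorem dyadic.mem_intIcc_prod {N : ℝ} {n : ℤ × ℤ} (h : dyadic N n) :
    n ∈ intIcc (-(2 * N)) (2 * N) ×ˢ intIcc (-(2 * N)) (2 * N) := by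
  have h₁ : |(n.1 : ℝ)| ≤ 2 * N :=
    (abs_le_sqrt (le_add_of_nonneg_right (sq_nonneg _))).trans h.2
  have h₂ : |(n.2 : ℝ)| ≤ 2 * N :=
    (abs_le_sqrt (le_add_of_nonneg_left (sq_nonneg _))).trans h.2
  rw [mem_product, mem_intIcc, mem_intIcc, ← abs_le, ← abs_le]
  exact ⟨h₁, h₂⟩

theorem abs_sub_mul_sub_mul_sub_add_one_le {γ μ N a b c : ℝ} (hγ₀ : 0 ≤ γ) (hγ : γ ≤ 2)
    (hN : 1 ≤ N) (hμ : |μ| ≤ N) (ha : |a| ≤ 2 * N) (hb : |b| ≤ 2 * N) (hc : |c| ≤ 2 * N) :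
    |μ - γ * (a - b) * (a - c)| + 1 ≤ (6 * N) ^ 2 := by
  have hab : |a - b| ≤ 4 * N := (abs_sub _ _).trans (by linarith)
  have hac : |a - c| ≤ 4 * N := (abs_sub _ _).trans (by linarith)
  have habs : |γ * (a - b) * (a - c)| = γ * |a - b| * |a - c| := by
    rw [abs_mul, abs_mul, abs_of_nonneg hγ₀]
  calc |μ - γ * (a - b) * (a - c)| + 1 ≤ |μ| + γ * |a - b| * |a - c| + 1 := by
        linarith [abs_sub μ (γ * (a - b) * (a - c))]
    _ ≤ N + 2 * (4 * N) * (4 * N) + 1 := by gcongr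
    _ ≤ (6 * N) ^ 2 := by nlinarith

theorem ncard_nearPairs_intIcc_le {C ε γ μ N N₂ N₃ : ℝ} {n₁ : ℤ × ℤ} (hε : 0 < ε)
    (hdiv : ∀ n : ℕ, n ≠ 0 → (#n.divisors : ℝ) ≤ C * n ^ (ε / 2)) (hγ₁ : 1 ≤ γ) (hγ₂ : γ ≤ 2)
    (hN₂ : 1 ≤ N₂) (hN₃ : 1 ≤ N₃) (hN₂N : N₂ ≤ N) (hN₃N : N₃ ≤ N) (hμ : |μ| ≤ N)
    (hn₁ : |(n₁.2 : ℝ)| ≤ 2 * N) :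
    ((nearPairs γ μ n₁ (intIcc (-(2 * N₂)) (2 * N₂)) (intIcc (-(2 * N₃)) (2 * N₃))).ncard : ℝ) ≤
      25 * (6 * C * 6 ^ ε + 7) * N ^ ε * N₂ * N₃ := by
  set I₂ := intIcc (-(2 * N₂)) (2 * N₂)
  set I₃ := intIcc (-(2 * N₃)) (2 * N₃)
  have hD : ∀ t ∈ I₂ ×ˢ I₃, ∀ m : ℕ, m ≠ 0 →
      (m : ℝ) ≤ |μ - γ * ((t.1 - n₁.2 : ℤ) : ℝ) * ((t.1 - t.2 : ℤ) : ℝ)| + 1 →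
      (#m.divisors : ℝ) ≤ C * (6 * N) ^ ε := by
    intro t ht m hm hmt
    rw [mem_product, mem_intIcc, mem_intIcc, ← abs_le, ← abs_le] at ht
    refine card_divisors_le_rpow_of_le_sq hε.le (by linarith) hdiv hm (hmt.trans ?_)
    push_cast
    exact abs_sub_mul_sub_mul_sub_add_one_le (by linarith) hγ₂ (by linarith) hμ
      (by linarith) hn₁ (by linarith)
  have hI₂ : (#I₂ : ℝ) ≤ 5 * N₂ := (card_intIcc_le (by linarith)).trans (by linarith)
  have hI₃ : (#I₃ : ℝ) ≤ 5 * N₃ := (card_intIcc_le (by linarith)).trans (by linarith)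
  have hNε : 1 ≤ N ^ ε := one_le_rpow (by linarith) hε.le
  calc ((nearPairs γ μ n₁ I₂ I₃).ncard : ℝ) ≤ (6 * (C * (6 * N) ^ ε) + 7) * (#I₂ * #I₃) :=
        ncard_nearPairs_le hγ₁ hD
    _ ≤ (6 * (C * (6 * N) ^ ε) + 7) * (5 * N₂ * (5 * N₃)) := by
        have hC : 0 ≤ C := zero_le_one.trans (by simpa using hdiv 1 one_ne_zero)
        have h6N : 0 ≤ C * (6 * N) ^ ε := mul_nonneg hC (rpow_nonneg (by linarith) _)
        gcongr
    _ = 25 * (6 * C * 6 ^ ε * N ^ ε + 7) * N₂ * N₃ := by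
        rw [mul_rpow (by norm_num) (by linarith)]; ring
    _ ≤ 25 * (6 * C * 6 ^ ε + 7) * N ^ ε * N₂ * N₃ := by
        linarith [mul_le_mul_of_nonneg_left hNε (by positivity : (0 : ℝ) ≤ N₂ * N₃)]

/-- Strong counting lemma: for every `ε > 0` there is `C_ε` so that for `γ ∈ (1,2)`,
`|μ| = O(N¹)` with `N¹ = max(N₁,N₂,N₃)`, and any fixed `n₁` with `|n₁| ∼ N₁`, the number
of pairs `(n₂, n₃)` with `|n₂| ∼ N₂`, `|n₃| ∼ N₃`, `n₂ ≠ n₁`, `n₂ ≠ n₃` and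
`⟨n₂-n₁, n₂-n₃⟩_γ = μ + O(1)` is at most `C_ε · (N¹)^ε · N₂ · N₃`. -/
theorem strong_counting :
    ∀ ε : ℝ, 0 < ε → ∃ C : ℝ, 0 < C ∧ ∀ γ : ℝ, 1 < γ → γ < 2 →
      ∀ N₁ N₂ N₃ μ : ℝ, 1 ≤ N₁ → 1 ≤ N₂ → 1 ≤ N₃ → |μ| ≤ max N₁ (max N₂ N₃) →
      ∀ n₁ : ℤ × ℤ, dyadic N₁ n₁ →
        (Set.ncard {p : (ℤ × ℤ) × (ℤ × ℤ) | dyadic N₂ p.1 ∧ dyadic N₃ p.2 ∧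
            p.1 ≠ n₁ ∧ p.1 ≠ p.2 ∧
            |gammaInner γ (p.1 - n₁) (p.1 - p.2) - μ| ≤ 1} : ℝ)
          ≤ C * (max N₁ (max N₂ N₃)) ^ ε * N₂ * N₃ := by
  intro ε hε
  obtain ⟨C, hC, hdiv⟩ := Nat.exists_card_divisors_le_rpow (half_pos hε)
  refine ⟨25 * (6 * C * 6 ^ ε + 7), by positivity, ?_⟩
  intro γ hγ₁ hγ₂ N₁ N₂ N₃ μ hN₁ hN₂ hN₃ hμ n₁ hn₁
  have hN₁N : N₁ ≤ max N₁ (max N₂ N₃) := le_max_left _ _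
  have hN₂N : N₂ ≤ max N₁ (max N₂ N₃) := (le_max_left _ _).trans (le_max_right _ _)
  have hN₃N : N₃ ≤ max N₁ (max N₂ N₃) := (le_max_right _ _).trans (le_max_right _ _)
  have hn₁₂ := (mem_product.1 hn₁.mem_intIcc_prod).2
  rw [mem_intIcc, ← abs_le] at hn₁₂
  calc _ ≤ ((nearPairs γ μ n₁ (intIcc (-(2 * N₂)) (2 * N₂))
        (intIcc (-(2 * N₃)) (2 * N₃))).ncard : ℝ) := by
        refine Nat.cast_le.2 (Set.ncard_le_ncard ?_ finite_nearPairs)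
        rintro p ⟨h₂, h₃, hne, -, hp⟩
        exact mem_nearPairs.2 ⟨h₂.mem_intIcc_prod, h₃.mem_intIcc_prod, hne, hp⟩
    _ ≤ _ := ncard_nearPairs_intIcc_le hε hdiv hγ₁.le hγ₂.le hN₂ hN₃ hN₂N hN₃N hμ
        (hn₁₂.trans (by linarith))
end

section
/- Cauchy–Schwarz-type matrix inequality: let (a_{ij}) be complex numbers (finitely supported) and (b_j) complex with Σ_j |b_j|² ≤ 1. Then Σ_i |Σ_j a_{ij} b_j|² ≤ C·[ max_j Σ_i |a_{ij}|² + ( Σ_{j≠j'} |Σ_i a_{ij} \overline{a_{ij'}}|² )^{1/2} ]. -/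
open Finset

/-- Cauchy–Schwarz type matrix inequality: there is a universal constant `C` so that for
finite index sets `I, J`, a matrix `a : I → J → ℂ` and a vector `b : J → ℂ` with
`∑ j ‖b j‖² ≤ 1`, one has
`∑ i ‖∑ j a i j b j‖² ≤ C (max_j ∑ i ‖a i j‖² + (∑_{j ≠ j'} ‖∑ i a i j conj (a i j')‖²)^{1/2})`. -/
theorem matrix_cauchy_schwarz :
    ∃ C : ℝ, 0 < C ∧ ∀ (I J : Type) [Fintype I] [Fintype J] [DecidableEq J]
      (a : I → J → ℂ) (b : J → ℂ),
      (∑ j, ‖b j‖ ^ 2) ≤ 1 →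
      (∑ i, ‖∑ j, a i j * b j‖ ^ 2) ≤
        C * ((⨆ j, ∑ i, ‖a i j‖ ^ 2) +
          Real.sqrt (∑ j, ∑ j', if j ≠ j' then
            ‖∑ i, a i j * (starRingEnd ℂ) (a i j')‖ ^ 2 else 0)) := by
  refine ⟨1, one_pos, ?_⟩
  intro I J _ _ _ a b hb
  set G : J → J → ℂ := fun j j' => ∑ i, a i j * (starRingEnd ℂ) (a i j') with hGdef
  set M : ℝ := ⨆ j, ∑ i, ‖a i j‖ ^ 2 with hMdef
  set T : ℝ := ∑ j, ∑ j', if j ≠ j' then ‖G j j'‖ ^ 2 else 0 with hTdef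
  have hbs : (0:ℝ) ≤ ∑ j, ‖b j‖ ^ 2 := Finset.sum_nonneg fun j _ => by positivity
  have e1 : ∀ z : ℂ, ‖z‖ ^ 2 = (z * (starRingEnd ℂ) z).re := by
    intro z
    rw [Complex.mul_conj, Complex.ofReal_re, Complex.sq_norm]
  -- Step 1: expand the square
  have key : ∑ i, (∑ j, a i j * b j) * (starRingEnd ℂ) (∑ j', a i j' * b j')
      = ∑ j, ∑ j', b j * (starRingEnd ℂ) (b j') * G j j' := by
    have step : ∀ i, (∑ j, a i j * b j) * (starRingEnd ℂ) (∑ j', a i j' * b j')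
        = ∑ j, ∑ j', b j * (starRingEnd ℂ) (b j') * (a i j * (starRingEnd ℂ) (a i j')) := by
      intro i
      rw [map_sum, Finset.sum_mul_sum]
      exact Finset.sum_congr rfl fun j _ => Finset.sum_congr rfl fun j' _ => by
        rw [map_mul]; ring
    calc ∑ i, (∑ j, a i j * b j) * (starRingEnd ℂ) (∑ j', a i j' * b j')
        = ∑ i, ∑ j, ∑ j', b j * (starRingEnd ℂ) (b j') * (a i j * (starRingEnd ℂ) (a i j')) :=
          Finset.sum_congr rfl fun i _ => step i
      _ = ∑ j, ∑ i, ∑ j', b j * (starRingEnd ℂ) (b j') * (a i j * (starRingEnd ℂ) (a i j')) := Finset.sum_comm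
      _ = ∑ j, ∑ j', ∑ i, b j * (starRingEnd ℂ) (b j') * (a i j * (starRingEnd ℂ) (a i j')) :=
          Finset.sum_congr rfl fun j _ => Finset.sum_comm
      _ = ∑ j, ∑ j', b j * (starRingEnd ℂ) (b j') * G j j' := by
          refine Finset.sum_congr rfl fun j _ => Finset.sum_congr rfl fun j' _ => ?_
          rw [hGdef, Finset.mul_sum]
  have h1 : (∑ i, ‖∑ j, a i j * b j‖ ^ 2)
      = ∑ j, ∑ j', (b j * (starRingEnd ℂ) (b j') * G j j').re := by
    calc (∑ i, ‖∑ j, a i j * b j‖ ^ 2)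
        = (∑ i, (∑ j, a i j * b j) * (starRingEnd ℂ) (∑ j', a i j' * b j')).re := by
          rw [Complex.re_sum]; exact Finset.sum_congr rfl fun i _ => e1 _
      _ = (∑ j, ∑ j', b j * (starRingEnd ℂ) (b j') * G j j').re := by rw [key]
      _ = ∑ j, ∑ j', (b j * (starRingEnd ℂ) (b j') * G j j').re := by
          rw [Complex.re_sum]
          exact Finset.sum_congr rfl fun j _ => Complex.re_sum _ _
  -- termwise bound
  have h2 : ∀ j j', (b j * (starRingEnd ℂ) (b j') * G j j').re ≤
      (if j = j' then ‖b j‖ ^ 2 * (∑ i, ‖a i j‖ ^ 2) else ‖b j‖ * ‖b j'‖ * ‖G j j'‖) := by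
    intro j j'
    by_cases h : j = j'
    · subst h
      rw [if_pos rfl, Complex.mul_conj, Complex.re_ofReal_mul]
      have hG : (G j j).re = ∑ i, ‖a i j‖ ^ 2 := by
        rw [hGdef, Complex.re_sum]
        exact Finset.sum_congr rfl fun i _ => (e1 _).symm
      rw [hG, Complex.normSq_eq_norm_sq]
    · rw [if_neg h]
      calc (b j * (starRingEnd ℂ) (b j') * G j j').re
          ≤ ‖b j * (starRingEnd ℂ) (b j') * G j j'‖ := Complex.re_le_norm _
        _ = ‖b j‖ * ‖b j'‖ * ‖G j j'‖ := by
            simp [norm_mul]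
  -- split into diagonal and off-diagonal parts
  have h3 : ∑ j, ∑ j',
        (if j = j' then ‖b j‖ ^ 2 * (∑ i, ‖a i j‖ ^ 2) else ‖b j‖ * ‖b j'‖ * ‖G j j'‖)
      = (∑ j, ‖b j‖ ^ 2 * (∑ i, ‖a i j‖ ^ 2))
        + ∑ j, ∑ j', (if j = j' then 0 else ‖b j‖ * ‖b j'‖ * ‖G j j'‖) := by
    rw [← Finset.sum_add_distrib]
    refine Finset.sum_congr rfl fun j _ => ?_
    have : ∀ j', (if j = j' then ‖b j‖ ^ 2 * (∑ i, ‖a i j‖ ^ 2) else ‖b j‖ * ‖b j'‖ * ‖G j j'‖)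
        = (if j = j' then ‖b j'‖ ^ 2 * (∑ i, ‖a i j'‖ ^ 2) else 0)
          + (if j = j' then 0 else ‖b j‖ * ‖b j'‖ * ‖G j j'‖) := by
      intro j'
      by_cases h : j = j' <;> simp [h]
    rw [Finset.sum_congr rfl fun j' _ => this j', Finset.sum_add_distrib,
      Finset.sum_ite_eq _ j _]
    simp
  -- diagonal bound
  have hMle : ∀ j, (∑ i, ‖a i j‖ ^ 2) ≤ M := by
    intro j
    rw [hMdef]
    exact le_ciSup (f := fun j => ∑ i, ‖a i j‖ ^ 2) (Set.Finite.bddAbove (Set.finite_range _)) j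
  have hM0 : 0 ≤ M := by
    rcases isEmpty_or_nonempty J with hJ | hJ
    · rw [hMdef, Real.iSup_of_isEmpty]
    · obtain ⟨j⟩ := hJ
      exact le_trans (Finset.sum_nonneg fun i _ => by positivity) (hMle j)
  have hD : (∑ j, ‖b j‖ ^ 2 * (∑ i, ‖a i j‖ ^ 2)) ≤ M := by
    calc (∑ j, ‖b j‖ ^ 2 * (∑ i, ‖a i j‖ ^ 2)) ≤ ∑ j, ‖b j‖ ^ 2 * M := by
          refine Finset.sum_le_sum fun j _ => ?_
          exact mul_le_mul_of_nonneg_left (hMle j) (by positivity)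
      _ = (∑ j, ‖b j‖ ^ 2) * M := by rw [Finset.sum_mul]
      _ ≤ 1 * M := mul_le_mul_of_nonneg_right hb hM0
      _ = M := one_mul M
  -- off-diagonal bound via Cauchy-Schwarz
  have hO : (∑ j, ∑ j', (if j = j' then 0 else ‖b j‖ * ‖b j'‖ * ‖G j j'‖)) ≤ Real.sqrt T := by
    have hrw : (∑ j, ∑ j', (if j = j' then 0 else ‖b j‖ * ‖b j'‖ * ‖G j j'‖))
        = ∑ p : J × J, (‖b p.1‖ * ‖b p.2‖) * (if p.1 = p.2 then 0 else ‖G p.1 p.2‖) := by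
      rw [Fintype.sum_prod_type]
      refine Finset.sum_congr rfl fun j _ => Finset.sum_congr rfl fun j' _ => ?_
      by_cases h : j = j' <;> simp [h, mul_comm, mul_assoc]
    rw [hrw]
    have CS := Real.sum_mul_le_sqrt_mul_sqrt Finset.univ
      (fun p : J × J => ‖b p.1‖ * ‖b p.2‖)
      (fun p : J × J => if p.1 = p.2 then 0 else ‖G p.1 p.2‖)
    refine le_trans CS ?_
    have e2 : ∑ p : J × J, (‖b p.1‖ * ‖b p.2‖) ^ 2
        = (∑ j, ‖b j‖ ^ 2) * (∑ j, ‖b j‖ ^ 2) := by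
      rw [Finset.sum_mul_sum, Fintype.sum_prod_type]
      exact Finset.sum_congr rfl fun j _ => Finset.sum_congr rfl fun j' _ => by ring
    have e3 : ∑ p : J × J, (if p.1 = p.2 then 0 else ‖G p.1 p.2‖) ^ 2 = T := by
      rw [hTdef, Fintype.sum_prod_type]
      refine Finset.sum_congr rfl fun j _ => Finset.sum_congr rfl fun j' _ => ?_
      by_cases h : j = j' <;> simp [h]
    rw [e2, e3]
    have hle1 : Real.sqrt ((∑ j, ‖b j‖ ^ 2) * (∑ j, ‖b j‖ ^ 2)) ≤ 1 := by
      rw [Real.sqrt_mul_self hbs]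
      exact hb
    calc Real.sqrt ((∑ j, ‖b j‖ ^ 2) * (∑ j, ‖b j‖ ^ 2)) * Real.sqrt T
        ≤ 1 * Real.sqrt T := mul_le_mul_of_nonneg_right hle1 (Real.sqrt_nonneg _)
      _ = Real.sqrt T := one_mul _
  -- combine
  rw [one_mul, h1]
  calc ∑ j, ∑ j', (b j * (starRingEnd ℂ) (b j') * G j j').re
      ≤ ∑ j, ∑ j',
        (if j = j' then ‖b j‖ ^ 2 * (∑ i, ‖a i j‖ ^ 2) else ‖b j‖ * ‖b j'‖ * ‖G j j'‖) :=
        Finset.sum_le_sum fun j _ => Finset.sum_le_sum fun j' _ => h2 j j'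
    _ = (∑ j, ‖b j‖ ^ 2 * (∑ i, ‖a i j‖ ^ 2))
        + ∑ j, ∑ j', (if j = j' then 0 else ‖b j‖ * ‖b j'‖ * ‖G j j'‖) := h3
    _ ≤ M + Real.sqrt T := add_le_add hD hO
end

section
/- Dual Cauchy–Schwarz-type matrix inequality: let (a_{ij}) be complex numbers (finitely supported) and (b_j) complex with Σ_j |b_j|² ≤ 1. Then Σ_i |Σ_j a_{ij} b_j|² ≤ C·[ max_i Σ_j |a_{ij}|² + ( Σ_{i≠i'} |Σ_j a_{i'j} \overline{a_{ij}}|² )^{1/2} ]. -/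
/-!
With `A = (a i j)` and the `ℓ²` operator norm, `∑ i ‖(A b) i‖² ≤ ‖A‖² = ‖A Aᴴ‖` by the
C⋆-identity. Splitting `A Aᴴ` into its diagonal, of norm `max_i ∑ j ‖a i j‖²`, and its
off-diagonal part, whose operator norm is at most its Frobenius norm, gives the bound with `C = 1`.
-/

open Finset
open scoped Matrix Matrix.Norms.L2Operator

lemma norm_sum_mul_sq_le {𝕜 ι : Type*} [RCLike 𝕜] (s : Finset ι) (f g : ι → 𝕜) :
    ‖∑ i ∈ s, f i * g i‖ ^ 2 ≤ (∑ i ∈ s, ‖f i‖ ^ 2) * ∑ i ∈ s, ‖g i‖ ^ 2 := by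
  calc ‖∑ i ∈ s, f i * g i‖ ^ 2 ≤ (∑ i ∈ s, ‖f i‖ * ‖g i‖) ^ 2 := by
        gcongr
        exact (norm_sum_le _ _).trans_eq (by simp only [norm_mul])
    _ ≤ _ := sum_mul_sq_le_sq_mul_sq s _ _

namespace Matrix

variable {𝕜 : Type*} [RCLike 𝕜] {m n : Type*} [Fintype n]

lemma norm_mul_conjTranspose_apply_self (A : Matrix m n 𝕜) (i : m) :
    ‖(A * Aᴴ) i i‖ = ∑ j, ‖A i j‖ ^ 2 := by
  simp only [mul_apply, conjTranspose_apply, RCLike.star_def, RCLike.mul_conj]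
  simp_rw [← RCLike.ofReal_pow, ← RCLike.ofReal_sum]
  rw [RCLike.norm_ofReal, abs_of_nonneg (by positivity)]

variable [Fintype m] [DecidableEq n]

lemma sum_norm_mulVec_sq_le (A : Matrix m n 𝕜) (x : n → 𝕜) :
    ∑ i, ‖(A *ᵥ x) i‖ ^ 2 ≤ ‖A‖ ^ 2 * ∑ j, ‖x j‖ ^ 2 := by
  have h := A.l2_opNorm_mulVec (WithLp.toLp 2 x)
  rwa [← sq_le_sq₀ (norm_nonneg _) (by positivity), mul_pow,
    EuclideanSpace.norm_sq_eq, EuclideanSpace.norm_sq_eq] at h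

lemma l2_opNorm_le_frobenius (A : Matrix m n 𝕜) :
    ‖A‖ ≤ √(∑ i, ∑ j, ‖A i j‖ ^ 2) := by
  rw [l2_opNorm_def]
  refine ContinuousLinearMap.opNorm_le_bound _ (Real.sqrt_nonneg _) fun x => ?_
  refine (sq_le_sq₀ (norm_nonneg _) (by positivity)).mp ?_
  rw [mul_pow, Real.sq_sqrt (by positivity), EuclideanSpace.norm_sq_eq, EuclideanSpace.norm_sq_eq,
    sum_mul]
  exact sum_le_sum fun i _ => norm_sum_mul_sq_le _ (A i) x.ofLp

lemma l2_opNorm_sq_eq_mul_conjTranspose [DecidableEq m] (A : Matrix m n 𝕜) :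
    ‖A‖ ^ 2 = ‖A * Aᴴ‖ := by
  simpa [sq, l2_opNorm_conjTranspose] using (l2_opNorm_conjTranspose_mul_self Aᴴ).symm

lemma l2_opNorm_le_norm_diag_add_offDiag (B : Matrix n n 𝕜) :
    ‖B‖ ≤ ‖B.diag‖ + √(∑ i, ∑ j, if i ≠ j then ‖B i j‖ ^ 2 else 0) := by
  have hoff (i j : n) : ‖(B - diagonal B.diag) i j‖ ^ 2 = if i ≠ j then ‖B i j‖ ^ 2 else 0 := by
    rcases eq_or_ne i j with rfl | hij
    · simp
    · simp [hij]
  calc ‖B‖ = ‖diagonal B.diag + (B - diagonal B.diag)‖ := by rw [add_sub_cancel]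
    _ ≤ ‖diagonal B.diag‖ + ‖B - diagonal B.diag‖ := norm_add_le _ _
    _ ≤ _ := by
      rw [l2_opNorm_diagonal]
      grw [l2_opNorm_le_frobenius]
      simp only [hoff, le_refl]

end Matrix

/-- Dual Cauchy–Schwarz type matrix inequality: there is a universal constant `C` so that
for finite index sets `I, J`, a matrix `a : I → J → ℂ` and a vector `b : J → ℂ` with
`∑ j ‖b j‖² ≤ 1`, one has
`∑ i ‖∑ j a i j b j‖² ≤ C (max_i ∑ j ‖a i j‖² + (∑_{i ≠ i'} ‖∑ j a i' j conj (a i j)‖²)^{1/2})`. -/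
theorem matrix_cauchy_schwarz_dual :
    ∃ C : ℝ, 0 < C ∧ ∀ (I J : Type) [Fintype I] [DecidableEq I] [Fintype J]
      (a : I → J → ℂ) (b : J → ℂ),
      (∑ j, ‖b j‖ ^ 2) ≤ 1 →
      (∑ i, ‖∑ j, a i j * b j‖ ^ 2) ≤
        C * ((⨆ i, ∑ j, ‖a i j‖ ^ 2) +
          Real.sqrt (∑ i, ∑ i', if i ≠ i' then
            ‖∑ j, a i' j * (starRingEnd ℂ) (a i j)‖ ^ 2 else 0)) := by
  refine ⟨1, one_pos, fun I J _ _ _ a b hb => ?_⟩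
  classical
  set A : Matrix I J ℂ := Matrix.of a
  have hdiag : ‖Matrix.diag (A * Aᴴ)‖ ≤ ⨆ i, ∑ j, ‖a i j‖ ^ 2 := by
    refine (pi_norm_le_iff_of_nonneg (Real.iSup_nonneg fun (i : I) => by positivity)).2 fun i => ?_
    rw [Matrix.diag_apply, Matrix.norm_mul_conjTranspose_apply_self]
    exact le_ciSup (f := fun i => ∑ j, ‖a i j‖ ^ 2) (Finite.bddAbove_range _) i
  have hoff : (∑ i, ∑ i', if i ≠ i' then ‖(A * Aᴴ) i i'‖ ^ 2 else 0) =
      ∑ i, ∑ i', if i ≠ i' then ‖∑ j, a i' j * (starRingEnd ℂ) (a i j)‖ ^ 2 else 0 := by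
    rw [sum_comm]
    simp only [ne_comm, Matrix.mul_apply, Matrix.conjTranspose_apply, RCLike.star_def]
    rfl
  calc ∑ i, ‖∑ j, a i j * b j‖ ^ 2 = ∑ i, ‖(A *ᵥ b) i‖ ^ 2 := rfl
    _ ≤ ‖A‖ ^ 2 * ∑ j, ‖b j‖ ^ 2 := A.sum_norm_mulVec_sq_le b
    _ ≤ ‖A‖ ^ 2 := mul_le_of_le_one_right (sq_nonneg _) hb
    _ = ‖A * Aᴴ‖ := A.l2_opNorm_sq_eq_mul_conjTranspose
    _ ≤ _ := (A * Aᴴ).l2_opNorm_le_norm_diag_add_offDiag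
    _ ≤ _ := by rw [one_mul, hoff]; gcongr
end
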